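/- arXiv:2310.00102 — 7 statements merged into one kernel-verified Lean document; each statement's English description precedes it below -/
import Mathlib

section
/- Let X be a finite set of n distinct K-rational points of P^{k-1} and let a ≥ 1 be an integer. Then the minimum distance of the evaluation code of order a satisfies d(X)_a = n − max{ |X'| : X' ⊊ X and dim_K I(X')_a > dim_K I(X)_a }, where the maximum is over proper subsets X' of X (the set over which the maximum is taken is nonempty, as it contains the empty set when I(X)_a ≠ R_a). -/
open MvPolynomial

/-- The representative vectors define pairwise distinct points of projective space. -/
def ProjectivelyDistinct {K : Type*} [Field K] {n k : ℕ} (v : Fin n → Fin k → K) : Prop :=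
  ∀ i j : Fin n, i ≠ j → ∀ c : K, v i ≠ c • v j

/-- The points are in general linear position: any at most `k` of them are linearly
independent. -/
def GeneralLinearPosition (K : Type*) [Field K] {n k : ℕ} (v : Fin n → Fin k → K) : Prop :=
  ∀ S : Finset (Fin n), S.card ≤ k → LinearIndependent K (fun i : S => v (i : Fin n))

/-- Minimum distance of the evaluation code of order `a`. -/
noncomputable def minDist {K : Type*} [Field K] {n k : ℕ} (a : ℕ) (v : Fin n → Fin k → K) : ℕ :=
  sInf { m | ∃ f : MvPolynomial (Fin k) K, f.IsHomogeneous a ∧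
      (∃ i, eval (v i) f ≠ 0) ∧ m = Set.ncard {i | eval (v i) f ≠ 0} }

/-- Initial degree of the vanishing ideal of the subfamily of points indexed by `S`. -/
noncomputable def initDegOn {K : Type*} [Field K] {n k : ℕ}
    (v : Fin n → Fin k → K) (S : Set (Fin n)) : ℕ :=
  sInf { d | ∃ f : MvPolynomial (Fin k) K, f ≠ 0 ∧ f.IsHomogeneous d ∧ ∀ i ∈ S, eval (v i) f = 0 }

/-- Degree-`a` part of the vanishing ideal of the points indexed by `S`, as a subspace. -/
noncomputable def homVan {K : Type*} [Field K] {n k : ℕ} (a : ℕ)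
    (v : Fin n → Fin k → K) (S : Set (Fin n)) : Submodule K (MvPolynomial (Fin k) K) :=
  homogeneousSubmodule (Fin k) K a ⊓
    ⨅ i ∈ S, LinearMap.ker ((aeval (v i) : MvPolynomial (Fin k) K →ₐ[K] K).toLinearMap)

/-- Hilbert function of `R/I(X)` where `X` is the set of points indexed by `S`. -/
noncomputable def HFpts {K : Type*} [Field K] {n k : ℕ}
    (v : Fin n → Fin k → K) (S : Set (Fin n)) (i : ℕ) : ℕ :=
  Module.finrank K (homogeneousSubmodule (Fin k) K i) - Module.finrank K (homVan i v S)

/-- Maximum number of the points lying on a common hyperplane. -/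
noncomputable def hypNum {K : Type*} [Field K] {n k : ℕ} (v : Fin n → Fin k → K) : ℕ :=
  sSup { m | ∃ L : MvPolynomial (Fin k) K, L ≠ 0 ∧ L.IsHomogeneous 1 ∧
      m = Set.ncard {i | eval (v i) L = 0} }

/-- The homogeneous vanishing ideal of the points indexed by `S`. -/
noncomputable def projIdeal {K : Type*} [Field K] {n k : ℕ}
    (v : Fin n → Fin k → K) (S : Set (Fin n)) : Ideal (MvPolynomial (Fin k) K) :=
  Ideal.span { f | (∃ d, f.IsHomogeneous d) ∧ ∀ i ∈ S, eval (v i) f = 0 }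

/-- The minimum socle degree of the Artinian reduction by the linear form `L` of the
coordinate ring of the points indexed by `S`. -/
noncomputable def socleDeg {K : Type*} [Field K] {n k : ℕ}
    (v : Fin n → Fin k → K) (S : Set (Fin n)) (L : MvPolynomial (Fin k) K) : ℕ :=
  sInf { d | ∃ g : MvPolynomial (Fin k) K, g.IsHomogeneous d ∧
      g ∉ projIdeal v S ⊔ Ideal.span {L} ∧
      ∀ j : Fin k, MvPolynomial.X j * g ∈ projIdeal v S ⊔ Ideal.span {L} }

/-!
A codeword `ev_a f ≠ 0` of weight `w` vanishes exactly on a proper subset `X'` of `n - w` points,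
and `f ∈ I(X')_a \ I(X)_a`, so `dim I(X')_a > dim I(X)_a`. Conversely, if `dim I(X')_a > dim I(X)_a`
for a proper subset `X'`, some `f ∈ I(X')_a \ I(X)_a` gives a nonzero codeword vanishing on `X'`,
of weight at most `n - |X'|`. Minimising the weight is therefore maximising `|X'|`.
-/

theorem Nat.sInf_eq_sub_sSup_of_forall_exists {A B : Set ℕ} {n : ℕ} (hA : A.Nonempty)
    (hAB : ∀ w ∈ A, ∃ m ∈ B, m + w = n) (hBA : ∀ m ∈ B, ∃ w ∈ A, w + m ≤ n) :
    sInf A = n - sSup B := by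
  have hBdd : BddAbove B := ⟨n, fun m hm => by obtain ⟨w, -, h⟩ := hBA m hm; omega⟩
  have hB : B.Nonempty := by
    obtain ⟨w, hw⟩ := hA
    obtain ⟨m, hm, -⟩ := hAB w hw
    exact ⟨m, hm⟩
  apply le_antisymm
  · obtain ⟨w, hw, hle⟩ := hBA _ (Nat.sSup_mem hB hBdd)
    exact (Nat.sInf_le hw).trans (by omega)
  · refine le_csInf hA fun w hw => ?_
    obtain ⟨m, hm, rfl⟩ := hAB w hw
    have := le_csSup hBdd hm
    omega

theorem Fin.ncard_setOf_add_ncard_setOf_not {n : ℕ} (p : Fin n → Prop) :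
    {i | p i}.ncard + {i | ¬ p i}.ncard = n := by
  simpa [Set.compl_ofPred] using Set.ncard_add_ncard_compl {i | p i}

section homVan

variable {K : Type*} [Field K] {n k : ℕ} (a : ℕ) (v : Fin n → Fin k → K)

theorem mem_homVan_iff {S : Set (Fin n)} {f : MvPolynomial (Fin k) K} :
    f ∈ homVan a v S ↔ f.IsHomogeneous a ∧ ∀ i ∈ S, eval (v i) f = 0 := by
  simp only [homVan, Submodule.mem_inf, Submodule.mem_iInf, mem_homogeneousSubmodule,
    LinearMap.mem_ker, AlgHom.toLinearMap_apply, aeval_eq_eval]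

theorem homVan_antitone : Antitone (homVan a v) := fun _ _ hST _ hf =>
  (mem_homVan_iff a v).2 ⟨((mem_homVan_iff a v).1 hf).1,
    fun i hi => ((mem_homVan_iff a v).1 hf).2 i (hST hi)⟩

instance finiteDimensional_homVan (S : Set (Fin n)) : FiniteDimensional K (homVan a v S) :=
  have : FiniteDimensional K (homogeneousSubmodule (Fin k) K a) :=
    Submodule.finiteDimensional_of_le (S₂ := restrictTotalDegree (Fin k) K a) fun _ hf =>
      (mem_restrictTotalDegree _ _ _).2 ((mem_homogeneousSubmodule _ _).1 hf).totalDegree_le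
  Submodule.finiteDimensional_of_le inf_le_left

theorem finrank_homVan_univ_lt_iff (S : Set (Fin n)) :
    Module.finrank K (homVan a v Set.univ) < Module.finrank K (homVan a v S) ↔
      ∃ f : MvPolynomial (Fin k) K, f.IsHomogeneous a ∧ (∀ i ∈ S, eval (v i) f = 0) ∧
        ∃ i, eval (v i) f ≠ 0 := by
  have hle := homVan_antitone a v (Set.subset_univ S)
  constructor
  · intro hlt
    obtain ⟨f, hfS, hfU⟩ := SetLike.exists_of_lt (hle.lt_of_ne fun h => hlt.ne (h ▸ rfl))
    obtain ⟨hf, hvan⟩ := (mem_homVan_iff a v).1 hfS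
    refine ⟨f, hf, hvan, ?_⟩
    by_contra! h
    exact hfU ((mem_homVan_iff a v).2 ⟨hf, fun i _ => h i⟩)
  · rintro ⟨f, hf, hvan, i, hi⟩
    refine Submodule.finrank_lt_finrank_of_lt (SetLike.lt_iff_le_and_exists.2 ⟨hle, f, ?_, ?_⟩)
    · exact (mem_homVan_iff a v).2 ⟨hf, hvan⟩
    · exact fun hfU => hi (((mem_homVan_iff a v).1 hfU).2 i (Set.mem_univ i))

end homVan

theorem exists_isHomogeneous_eval_ne_zero {K σ : Type*} [Field K] (a : ℕ) {x : σ → K}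
    (hx : x ≠ 0) : ∃ f : MvPolynomial σ K, f.IsHomogeneous a ∧ eval x f ≠ 0 := by
  obtain ⟨j, hj⟩ := Function.ne_iff.1 hx
  exact ⟨X j ^ a, by simpa using (isHomogeneous_X K j).pow a, by simpa using pow_ne_zero a hj⟩

theorem mindist_eq_card_sub_max_subset_general {K : Type*} [Field K] {n k : ℕ}
    (v : Fin n → Fin k → K) (hv0 : ∀ i, v i ≠ 0)
    (a : ℕ) :
    minDist a v = n - sSup { m | ∃ S : Set (Fin n), S ≠ Set.univ ∧
        Module.finrank K (homVan a v Set.univ) < Module.finrank K (homVan a v S) ∧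
        m = S.ncard } := by
  rcases Nat.eq_zero_or_pos n with rfl | hn
  · simp [minDist]
  refine Nat.sInf_eq_sub_sSup_of_forall_exists ?_ ?_ ?_
  · obtain ⟨f, hf, hi⟩ := exists_isHomogeneous_eval_ne_zero a (hv0 ⟨0, hn⟩)
    exact ⟨_, f, hf, ⟨_, hi⟩, rfl⟩
  · rintro w ⟨f, hf, ⟨i, hi⟩, rfl⟩
    refine ⟨_, ⟨{i | eval (v i) f = 0}, fun h => hi (h.ge (Set.mem_univ i)), ?_, rfl⟩,
      Fin.ncard_setOf_add_ncard_setOf_not _⟩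
    exact (finrank_homVan_univ_lt_iff a v _).2 ⟨f, hf, fun _ h => h, i, hi⟩
  · rintro m ⟨S, -, hS, rfl⟩
    obtain ⟨f, hf, hvan, i, hi⟩ := (finrank_homVan_univ_lt_iff a v S).1 hS
    refine ⟨_, ⟨f, hf, ⟨i, hi⟩, rfl⟩, ?_⟩
    have hsub : S ⊆ {i | ¬ eval (v i) f ≠ 0} := fun i hi => not_not.2 (hvan i hi)
    have := Fin.ncard_setOf_add_ncard_setOf_not fun i => eval (v i) f ≠ 0
    have := Set.ncard_le_ncard hsub
    omega

/-- Proposition 2.2, minimum distance: `d(X)_a` equals `n` minus the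
maximum size of a proper subset `X' ⊊ X` with `dim I(X')_a > dim I(X)_a`. -/
theorem mindist_eq_card_sub_max_subset {K : Type*} [Field K] {n k : ℕ}
    (hk : 2 ≤ k)
    (v : Fin n → Fin k → K) (hv0 : ∀ i, v i ≠ 0) (hdist : ProjectivelyDistinct v)
    (a : ℕ) (ha : 1 ≤ a) :
    minDist a v = n - sSup { m | ∃ S : Set (Fin n), S ≠ Set.univ ∧
        Module.finrank K (homVan a v Set.univ) < Module.finrank K (homVan a v S) ∧
        m = S.ncard } :=
  mindist_eq_card_sub_max_subset_general v hv0 a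
end

section
/- Let X be a set of n distinct K-rational points of P^{k-1} with k ≥ 3, not all contained in a hyperplane (so α(X) ≥ 2), and let a be an integer with 1 ≤ a ≤ α(X) − 1. Then there exists u ∈ {0, 1, …, k−2} such that d(X)_a + u ≥ (k−1)(α(X) − a). -/
open MvPolynomial

/-! A minimum-weight codeword `f` of degree `a` is nonzero at exactly `d = d(X)_a` points.
Any `k - 1` points lie on a hyperplane, so these `d` points are covered by
`m = ⌈d / (k - 1)⌉` hyperplanes, and `f` times the product of their linear forms is a nonzero
form of degree `a + m` vanishing on `X`. Hence `α(X) ≤ a + m`, which is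
`(k - 1)(α(X) - a) ≤ d + (k - 2)`. -/

theorem exists_ne_zero_of_span_range_eq_top {K M ι : Type*} [Field K] [AddCommGroup M]
    [Module K M] [Nontrivial M] {v : ι → M} (hspan : Submodule.span K (Set.range v) = ⊤) :
    ∃ i, v i ≠ 0 := by
  by_contra! h
  exact top_ne_bot (hspan ▸ Submodule.span_eq_bot.mpr (by simpa using h))

theorem exists_isHomogeneous_one_ne_zero_forall_eval_eq_zero {K ι σ : Type*} [Field K]
    [Fintype σ] (v : ι → σ → K) (s : Finset ι) (hs : s.card < Fintype.card σ) :
    ∃ ℓ : MvPolynomial σ K, ℓ ≠ 0 ∧ ℓ.IsHomogeneous 1 ∧ ∀ i ∈ s, eval (v i) ℓ = 0 := by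
  let evalOn : (σ → K) →ₗ[K] (s → K) := Matrix.mulVecLin (Matrix.of fun (i : s) j => v i j)
  obtain ⟨c, hc, hc0⟩ := Submodule.exists_mem_ne_zero_of_ne_bot
    (LinearMap.ker_ne_bot_of_finrank_lt (f := evalOn) (by simpa using hs))
  refine ⟨∑ j, c j • X j, fun h => hc0 (funext ?_), ?_, fun i hi => ?_⟩
  · exact Fintype.linearIndependent_iff.mp (linearIndependent_X σ K) c h
  · exact (mem_homogeneousSubmodule 1 _).mp (Submodule.sum_mem _ fun j _ =>
      Submodule.smul_mem _ _ ((mem_homogeneousSubmodule 1 _).mpr (isHomogeneous_X K j)))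
  · simpa [evalOn, Matrix.mulVec, dotProduct, mul_comm] using congrFun hc ⟨i, hi⟩

theorem exists_isHomogeneous_ne_zero_forall_eval_eq_zero {K ι σ : Type*} [Field K]
    [Fintype σ] (v : ι → σ → K) {r : ℕ} (hr : r < Fintype.card σ) (m : ℕ) (T : Finset ι)
    (hT : T.card ≤ m * r) :
    ∃ g : MvPolynomial σ K, g ≠ 0 ∧ g.IsHomogeneous m ∧ ∀ i ∈ T, eval (v i) g = 0 := by
  classical
  induction m generalizing T with
  | zero =>
    obtain rfl : T = ∅ := Finset.card_eq_zero.mp (by simpa using hT)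
    exact ⟨1, one_ne_zero, isHomogeneous_one _ _, by simp⟩
  | succ m ih =>
    obtain ⟨T₀, hT₀, hT₀card⟩ := Finset.exists_subset_card_eq (min_le_left T.card r)
    obtain ⟨ℓ, hℓ0, hℓ, hℓT₀⟩ :=
      exists_isHomogeneous_one_ne_zero_forall_eval_eq_zero v T₀ (by omega)
    obtain ⟨g, hg0, hg, hgT⟩ := ih (T \ T₀) (by
      rw [Finset.card_sdiff_of_subset hT₀, hT₀card]; rw [Nat.succ_mul] at hT; omega)
    refine ⟨ℓ * g, mul_ne_zero hℓ0 hg0, by simpa [add_comm] using hℓ.mul hg, fun i hi => ?_⟩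
    by_cases h : i ∈ T₀
    · simp [hℓT₀ i h]
    · simp [hgT i (Finset.mem_sdiff.mpr ⟨hi, h⟩)]

theorem initDegOn_univ_le_add_of_ncard_le {K : Type*} [Field K] {n k : ℕ}
    {v : Fin n → Fin k → K} {f : MvPolynomial (Fin k) K} {a : ℕ} (hf : f.IsHomogeneous a)
    (hf0 : f ≠ 0) {r m : ℕ} (hr : r < k) (hsupp : Set.ncard {i | eval (v i) f ≠ 0} ≤ m * r) :
    initDegOn v Set.univ ≤ a + m := by
  classical
  obtain ⟨g, hg0, hg, hgv⟩ := exists_isHomogeneous_ne_zero_forall_eval_eq_zero v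
    (by simpa using hr) m {i | eval (v i) f ≠ 0}.toFinset
    (by rwa [← Set.ncard_eq_toFinset_card'])
  refine Nat.sInf_le ⟨f * g, mul_ne_zero hf0 hg0, hf.mul hg, fun i _ => ?_⟩
  by_cases h : eval (v i) f = 0
  · simp [h]
  · simp [hgv i (by simpa using h)]

theorem exists_minDist_eq {K : Type*} [Field K] {n k : ℕ} (a : ℕ) {v : Fin n → Fin k → K}
    (hv : ∃ i, v i ≠ 0) :
    ∃ f : MvPolynomial (Fin k) K, f.IsHomogeneous a ∧ f ≠ 0 ∧
      minDist a v = Set.ncard {i | eval (v i) f ≠ 0} := by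
  obtain ⟨i, hi⟩ := hv
  obtain ⟨j, hj⟩ : ∃ j, v i j ≠ 0 := Function.ne_iff.mp hi
  have hne : { m | ∃ f : MvPolynomial (Fin k) K, f.IsHomogeneous a ∧
      (∃ i, eval (v i) f ≠ 0) ∧ m = Set.ncard {i | eval (v i) f ≠ 0} }.Nonempty :=
    ⟨_, X j ^ a, by simpa using (isHomogeneous_X K j).pow a,
      ⟨i, by simpa using pow_ne_zero a hj⟩, rfl⟩
  obtain ⟨f, hf, ⟨i', hi'⟩, hd⟩ := Nat.sInf_mem hne
  exact ⟨f, hf, fun h => hi' (by simp [h]), hd⟩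

theorem mindist_add_u_ge_general {K : Type*} [Field K] {n k : ℕ}
    (hk : 3 ≤ k)
    (v : Fin n → Fin k → K)
    (hspan : Submodule.span K (Set.range v) = ⊤)
    (a : ℕ) :
    ∃ u : ℕ, u ≤ k - 2 ∧ (k - 1) * (initDegOn v Set.univ - a) ≤ minDist a v + u := by
  have : Nonempty (Fin k) := ⟨⟨0, by omega⟩⟩
  obtain ⟨f, hf, hf0, hd⟩ := exists_minDist_eq a (exists_ne_zero_of_span_range_eq_top hspan)
  obtain ⟨m, hm⟩ : ∃ m, m = (minDist a v + (k - 2)) / (k - 1) := ⟨_, rfl⟩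
  have hceil : minDist a v + (k - 2) < m * (k - 1) + (k - 1) :=
    hm ▸ Nat.lt_div_mul_add (by omega)
  have hα : initDegOn v Set.univ ≤ a + m :=
    initDegOn_univ_le_add_of_ncard_le hf hf0 (r := k - 1) (by omega) (by omega)
  refine ⟨k - 2, le_rfl, ?_⟩
  calc (k - 1) * (initDegOn v Set.univ - a)
      ≤ m * (k - 1) := by rw [mul_comm]; exact Nat.mul_le_mul_right _ (by omega)
    _ ≤ minDist a v + (k - 2) := hm ▸ Nat.div_mul_le_self _ _

/-- Proposition 3.2: there is `u ∈ {0,…,k-2}` with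
`d(X)_a + u ≥ (k-1)(α(X) - a)`. -/
theorem mindist_add_u_ge {K : Type*} [Field K] {n k : ℕ}
    (hk : 3 ≤ k)
    (v : Fin n → Fin k → K) (hv0 : ∀ i, v i ≠ 0) (hdist : ProjectivelyDistinct v)
    (hspan : Submodule.span K (Set.range v) = ⊤)
    (a : ℕ) (ha1 : 1 ≤ a) (ha2 : a ≤ initDegOn v Set.univ - 1) :
    ∃ u : ℕ, u ≤ k - 2 ∧ (k - 1) * (initDegOn v Set.univ - a) ≤ minDist a v + u :=
  mindist_add_u_ge_general hk v hspan a
end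

section
/- Let X be a set of n distinct K-rational points of P^{k-1} with k ≥ 3, not all contained in a hyperplane, and let a ≥ 1 be an integer. Then, as integers, d(X)_a ≥ (k−1)(α(X) − 1 − a) + 1. -/
/-!
Let `f` be a form of degree `a` whose codeword has minimum weight `d`. Any `k - 1` points lie on
a hyperplane, so the `d` points where `f` does not vanish are covered by `c = ⌈d / (k - 1)⌉`
hyperplanes. Multiplying `f` by the product of their linear forms gives a nonzero form of degree
`a + c` vanishing on all of `X`, so `α(X) ≤ a + c`, and `(k - 1)(c - 1) + 1 ≤ d` gives the bound.
-/

open MvPolynomial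

section LinearForms

variable {K ι : Type*} [Field K] {k : ℕ}

lemma eval_sum_C_mul_X_eq (φ : (Fin k → K) →ₗ[K] K) (x : Fin k → K) :
    eval x (∑ j, C (φ (Pi.single j 1)) * X j) = φ x := by
  rw [φ.pi_apply_eq_sum_univ x]
  simp only [map_sum, map_mul, eval_C, eval_X, smul_eq_mul, mul_comm]
  congr! with j
  simp [Pi.single_apply, eq_comm]

lemma exists_linearForm_eval_eq_zero_of_card_lt (v : ι → Fin k → K) (S : Finset ι)
    (hS : S.card < k) :
    ∃ L : MvPolynomial (Fin k) K, L ≠ 0 ∧ L.IsHomogeneous 1 ∧ ∀ i ∈ S, eval (v i) L = 0 := by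
  classical
  have hlt : Submodule.span K (S.image v : Set (Fin k → K)) < ⊤ := by
    refine lt_top_iff_ne_top.mpr fun htop => ?_
    have := finrank_span_finset_le_card (R := K) (S.image v)
    rw [Set.finrank, htop, finrank_top, Module.finrank_fin_fun] at this
    exact (this.trans Finset.card_image_le).not_gt hS
  obtain ⟨φ, hφ0, hφ⟩ := Submodule.exists_le_ker_of_lt_top _ hlt
  refine ⟨∑ j, C (φ (Pi.single j 1)) * X j, fun h0 => hφ0 ?_, ?_, fun i hi => ?_⟩
  · exact LinearMap.ext fun x => by simpa [h0] using (eval_sum_C_mul_X_eq φ x).symm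
  · exact IsHomogeneous.sum _ _ _ fun j _ => isHomogeneous_C_mul_X _ j
  · rw [eval_sum_C_mul_X_eq]
    exact hφ (Submodule.subset_span (Finset.mem_image_of_mem v hi))

lemma exists_isHomogeneous_eval_eq_zero_of_card_le (hk : 0 < k) (v : ι → Fin k → K) (c : ℕ)
    (T : Finset ι) (hT : T.card ≤ c * (k - 1)) :
    ∃ g : MvPolynomial (Fin k) K, g ≠ 0 ∧ g.IsHomogeneous c ∧ ∀ i ∈ T, eval (v i) g = 0 := by
  classical
  induction c generalizing T with
  | zero => exact ⟨1, one_ne_zero, isHomogeneous_one _ _, by simp_all⟩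
  | succ c ih =>
    obtain ⟨S, hST, hS⟩ := Finset.exists_subset_card_eq (min_le_left T.card (k - 1))
    obtain ⟨L, hL0, hL1, hLS⟩ := exists_linearForm_eval_eq_zero_of_card_lt v S (by omega)
    obtain ⟨g, hg0, hgc, hgT⟩ := ih (T \ S) (by rw [Finset.card_sdiff_of_subset hST]; grind)
    refine ⟨g * L, mul_ne_zero hg0 hL0, hgc.mul hL1, fun i hi => ?_⟩
    by_cases hiS : i ∈ S
    · rw [map_mul, hLS i hiS, mul_zero]
    · rw [map_mul, hgT i (Finset.mem_sdiff.mpr ⟨hi, hiS⟩), zero_mul]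

end LinearForms

section EvaluationCode

variable {K : Type*} [Field K] {n k : ℕ}

lemma initDegOn_univ_le_add (hk : 0 < k) (v : Fin n → Fin k → K) {a c : ℕ}
    {f : MvPolynomial (Fin k) K} (hf0 : f ≠ 0) (hf : f.IsHomogeneous a)
    (hc : {i | eval (v i) f ≠ 0}.ncard ≤ c * (k - 1)) :
    initDegOn v Set.univ ≤ a + c := by
  classical
  obtain ⟨g, hg0, hgc, hg⟩ := exists_isHomogeneous_eval_eq_zero_of_card_le hk v c
    {i | eval (v i) f ≠ 0}.toFinset (by rwa [← Set.ncard_eq_toFinset_card'])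
  refine Nat.sInf_le ⟨f * g, mul_ne_zero hf0 hg0, hf.mul hgc, fun i _ => ?_⟩
  by_cases hfi : eval (v i) f = 0
  · rw [map_mul, hfi, zero_mul]
  · rw [map_mul, hg i (Set.mem_toFinset.mpr hfi), mul_zero]

/-- If every form of degree `a` vanishes on all the points, `minDist a v = sInf ∅ = 0` and
`X 0 ^ a` is a witness of weight `0`. -/
lemma exists_isHomogeneous_ncard_eq_minDist (hk : 0 < k) (v : Fin n → Fin k → K) (a : ℕ) :
    ∃ f : MvPolynomial (Fin k) K, f ≠ 0 ∧ f.IsHomogeneous a ∧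
      {i | eval (v i) f ≠ 0}.ncard = minDist a v := by
  by_cases hne : { m | ∃ f : MvPolynomial (Fin k) K, f.IsHomogeneous a ∧
      (∃ i, eval (v i) f ≠ 0) ∧ m = Set.ncard {i | eval (v i) f ≠ 0} }.Nonempty
  · obtain ⟨f, hf, ⟨i, hi⟩, hd⟩ := Nat.sInf_mem hne
    exact ⟨f, fun h0 => hi (by rw [h0, map_zero]), hf, hd.symm⟩
  · have hzero : ∀ i, eval (v i) (X ⟨0, hk⟩ ^ a : MvPolynomial (Fin k) K) = 0 :=
      fun i => by_contra fun hi => hne ⟨_, _, isHomogeneous_X_pow _ a, ⟨i, hi⟩, rfl⟩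
    refine ⟨X ⟨0, hk⟩ ^ a, pow_ne_zero a (X_ne_zero _), isHomogeneous_X_pow _ a, ?_⟩
    rw [minDist, Set.not_nonempty_iff_eq_empty.mp hne, Nat.sInf_empty]
    simp [hzero]

end EvaluationCode

theorem mindist_ge_linear_alpha_bound_general {K : Type*} [Field K] {n k : ℕ}
    (hk : 3 ≤ k)
    (v : Fin n → Fin k → K)
    (a : ℕ) :
    ((k : ℤ) - 1) * ((initDegOn v Set.univ : ℤ) - 1 - (a : ℤ)) + 1 ≤ (minDist a v : ℤ) := by
  obtain ⟨f, hf0, hf, hfd⟩ := exists_isHomogeneous_ncard_eq_minDist (by omega) v a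
  set d := minDist a v
  -- `c = ⌈d / (k - 1)⌉`
  obtain ⟨c, hc⟩ : ∃ c, c = (d + (k - 2)) / (k - 1) := ⟨_, rfl⟩
  have hdc : d ≤ c * (k - 1) := by
    have : d + (k - 2) < c * (k - 1) + (k - 1) := hc ▸ Nat.lt_div_mul_add (by omega)
    omega
  have hcd : (c : ℤ) * (k - 1) ≤ d + k - 2 := by
    have : c * (k - 1) ≤ d + (k - 2) := hc ▸ Nat.div_mul_le_self _ _
    zify [show 2 ≤ k by omega, show 1 ≤ k by omega] at this
    linarith
  have hα : (initDegOn v Set.univ : ℤ) ≤ a + c := by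
    exact_mod_cast initDegOn_univ_le_add (by omega) v hf0 hf (hfd ▸ hdc)
  calc ((k : ℤ) - 1) * ((initDegOn v Set.univ : ℤ) - 1 - a) + 1
      ≤ ((k : ℤ) - 1) * (c - 1) + 1 := by gcongr (_ : ℤ) * ?_ + _ <;> omega
    _ ≤ d := by linarith

/-- Corollary 3.3: `d(X)_a ≥ (k-1)(α(X) - 1 - a) + 1` as integers. -/
theorem mindist_ge_linear_alpha_bound {K : Type*} [Field K] {n k : ℕ}
    (hk : 3 ≤ k)
    (v : Fin n → Fin k → K) (hv0 : ∀ i, v i ≠ 0) (hdist : ProjectivelyDistinct v)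
    (hspan : Submodule.span K (Set.range v) = ⊤)
    (a : ℕ) (ha : 1 ≤ a) :
    ((k : ℤ) - 1) * ((initDegOn v Set.univ : ℤ) - 1 - (a : ℤ)) + 1 ≤ (minDist a v : ℤ) :=
  mindist_ge_linear_alpha_bound_general hk v a
end

section
/- Let X be a set of n distinct K-rational points of P^{k-1} with n ≥ k ≥ 3, in general linear position, and let L ∈ R_1 be a linear form with L(v_P) ≠ 0 for every P ∈ X. Let s(X) be the minimum socle degree computed with respect to L, and let a be an integer with 1 ≤ a ≤ s(X) − 1. Then either d(X)_a ≤ k − 1 or d(X)_a ≥ (k−1)(s(X) − 1 − a) + 2. -/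
open MvPolynomial

/-!
Let `f` of degree `a` realise `d = d(X)_a` and let `P` be a point with `f(P) ≠ 0`. In general
linear position any `k - 1` points other than `P` lie on a hyperplane missing `P`, so multiplying
`f` by `⌊(d - 2)/(k - 1)⌋ + 1` linear forms kills the other `d - 1` points of its support and gives
a separator of `P` of degree `a + ⌊(d - 2)/(k - 1)⌋ + 1`. A separator `g` of least degree is not in
`(I(X), L)`, since writing `g = u + qL` the degree-lowered `q` would again be a separator, while
`x_j g ≡ (x_j(P)/L(P)) L g` modulo `I(X)`; so `g` is a socle element and `s(X) ≤ deg g`.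
-/

attribute [local instance] MvPolynomial.gradedAlgebra

section LinearForms

variable {K σ : Type*} [Field K] [Fintype σ]

theorem exists_isHomogeneous_one_eval_eq (φ : (σ → K) →ₗ[K] K) :
    ∃ ℓ : MvPolynomial σ K, ℓ.IsHomogeneous 1 ∧ ∀ w, eval w ℓ = φ w := by
  classical
  refine ⟨∑ j, C (φ fun i => if j = i then 1 else 0) * X j,
    IsHomogeneous.sum _ _ _ fun j _ => isHomogeneous_C_mul_X _ _, fun w => ?_⟩
  simp [LinearMap.pi_apply_eq_sum_univ φ w, mul_comm]

theorem exists_linearForm_eval_ne_zero_of_notMem_span {w : σ → K} {s : Set (σ → K)}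
    (hw : w ∉ Submodule.span K s) :
    ∃ ℓ : MvPolynomial σ K, ℓ.IsHomogeneous 1 ∧ eval w ℓ ≠ 0 ∧ ∀ u ∈ s, eval u ℓ = 0 := by
  obtain ⟨φ, hφw, hφs⟩ := Submodule.exists_dual_map_eq_bot_of_notMem hw inferInstance
  obtain ⟨ℓ, hℓ, hℓφ⟩ := exists_isHomogeneous_one_eval_eq φ
  refine ⟨ℓ, hℓ, by rwa [hℓφ], fun u hu => ?_⟩
  rw [hℓφ, ← Submodule.mem_bot K, ← hφs]
  exact Submodule.mem_map_of_mem (Submodule.subset_span hu)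

end LinearForms

section Separators

variable {K : Type*} [Field K] {n k : ℕ}

theorem GeneralLinearPosition.exists_linearForm {v : Fin n → Fin k → K}
    (hglp : GeneralLinearPosition K v) {P : Fin n} {T : Finset (Fin n)} (hPT : P ∉ T)
    (hT : T.card < k) :
    ∃ ℓ : MvPolynomial (Fin k) K, ℓ.IsHomogeneous 1 ∧ eval (v P) ℓ ≠ 0 ∧
      ∀ i ∈ T, eval (v i) ℓ = 0 := by
  classical
  have hli := hglp (insert P T) (by rw [Finset.card_insert_of_notMem hPT]; omega)
  have hspan : v P ∉ Submodule.span K (v '' T) := by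
    have := hli.notMem_span_image (s := {i | (i : Fin n) ∈ T})
      (x := ⟨P, Finset.mem_insert_self P T⟩) (by simpa using hPT)
    convert this using 3
    ext u
    aesop
  obtain ⟨ℓ, hℓ, hℓP, hℓT⟩ := exists_linearForm_eval_ne_zero_of_notMem_span hspan
  exact ⟨ℓ, hℓ, hℓP, fun i hi => hℓT _ ⟨i, hi, rfl⟩⟩

def IsSeparator (v : Fin n → Fin k → K) (P : Fin n) (h : MvPolynomial (Fin k) K) : Prop :=
  eval (v P) h ≠ 0 ∧ ∀ i ≠ P, eval (v i) h = 0

theorem GeneralLinearPosition.exists_isSeparator {v : Fin n → Fin k → K}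
    (hglp : GeneralLinearPosition K v) (hk : 0 < k) {P : Fin n} (t : ℕ) :
    ∀ {b : ℕ} {g : MvPolynomial (Fin k) K} {D : Finset (Fin n)}, g.IsHomogeneous b →
      eval (v P) g ≠ 0 → P ∉ D → (∀ i ∉ D, i ≠ P → eval (v i) g = 0) →
      D.card ≤ t * (k - 1) →
      ∃ h : MvPolynomial (Fin k) K, h.IsHomogeneous (b + t) ∧ IsSeparator v P h := by
  induction t with
  | zero =>
    intro b g D hg hgP _ hgD hD
    rw [zero_mul, Nat.le_zero, Finset.card_eq_zero] at hD
    exact ⟨g, hg, hgP, fun i hi => hgD i (by simp [hD]) hi⟩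
  | succ t ih =>
    intro b g D hg hgP hPD hgD hD
    -- Kill up to `k - 1` of the remaining points at once with a linear form not vanishing at `P`.
    obtain ⟨T, hTD, hTcard⟩ := Finset.exists_subset_card_eq (min_le_left D.card (k - 1))
    obtain ⟨ℓ, hℓ, hℓP, hℓT⟩ :=
      hglp.exists_linearForm (fun hP => hPD (hTD hP)) (by omega)
    have hrest : (D \ T).card ≤ t * (k - 1) := by
      rw [Finset.card_sdiff_of_subset hTD]
      rw [add_one_mul] at hD
      omega
    have hvanish : ∀ i ∉ D \ T, i ≠ P → eval (v i) (ℓ * g) = 0 := by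
      intro i hi hiP
      by_cases hiT : i ∈ T
      · simp [hℓT i hiT]
      · simp [hgD i (fun hiD => hi (Finset.mem_sdiff.2 ⟨hiD, hiT⟩)) hiP]
    obtain ⟨h, hh, hsep⟩ := ih (hℓ.mul hg) (by simp [hℓP, hgP])
      (fun hP => hPD (Finset.sdiff_subset hP)) hvanish hrest
    exact ⟨h, by convert hh using 1; omega, hsep⟩

end Separators

theorem homogeneousComponent_mul_of_isHomogeneous {σ R : Type*} [CommSemiring R]
    {L : MvPolynomial σ R} {e : ℕ} (hL : L.IsHomogeneous e) (q : MvPolynomial σ R) (m : ℕ) :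
    homogeneousComponent m (q * L) =
      if e ≤ m then homogeneousComponent (m - e) q * L else 0 := by
  rw [← decomposition.decompose'_apply, ← decomposition.decompose'_apply]
  exact DirectSum.coe_decompose_mul_of_right_mem _ m ((mem_homogeneousSubmodule _ _).2 hL)

section ProjIdeal

variable {K : Type*} [Field K] {n k : ℕ} {v : Fin n → Fin k → K} {S : Set (Fin n)}

theorem mem_projIdeal {f : MvPolynomial (Fin k) K} {d : ℕ} (hf : f.IsHomogeneous d)
    (hS : ∀ i ∈ S, eval (v i) f = 0) : f ∈ projIdeal v S :=
  Ideal.subset_span ⟨⟨d, hf⟩, hS⟩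

theorem eval_eq_zero_of_mem_projIdeal {u : MvPolynomial (Fin k) K} (hu : u ∈ projIdeal v S)
    {i : Fin n} (hi : i ∈ S) : eval (v i) u = 0 := by
  have : projIdeal v S ≤ RingHom.ker (eval (v i)) :=
    Ideal.span_le.2 fun f hf => RingHom.mem_ker.2 (hf.2 i hi)
  exact this hu

theorem projIdeal_isHomogeneous (v : Fin n → Fin k → K) (S : Set (Fin n)) :
    (projIdeal v S).IsHomogeneous (homogeneousSubmodule (Fin k) K) :=
  Ideal.homogeneous_span _ _ fun _ hf => hf.1

end ProjIdeal

section Socle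

variable {K : Type*} [Field K] {n k : ℕ} {v : Fin n → Fin k → K} {P : Fin n}
  {L g : MvPolynomial (Fin k) K}

theorem IsSeparator.X_mul_mem_sup_span (hg : IsSeparator v P g) {m : ℕ} (hgm : g.IsHomogeneous m)
    (hL : L.IsHomogeneous 1) (hLP : eval (v P) L ≠ 0) (j : Fin k) :
    X j * g ∈ projIdeal v Set.univ ⊔ Ideal.span {L} := by
  -- `X j - C c * L` vanishes at `v P`, and `g` at all other points.
  set c := v P j / eval (v P) L
  have hdiff : (X j - C c * L) * g ∈ projIdeal v Set.univ := by
    refine mem_projIdeal (((isHomogeneous_X K j).sub (hL.C_mul c)).mul hgm) fun i _ => ?_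
    by_cases hiP : i = P
    · subst hiP
      simp [c, hLP]
    · simp [hg.2 i hiP]
  have hLg : C c * L * g ∈ Ideal.span {L} :=
    Ideal.mem_span_singleton'.2 ⟨C c * g, by ring⟩
  rw [show X j * g = (X j - C c * L) * g + C c * L * g by ring]
  exact Ideal.add_mem _ (Ideal.mem_sup_left hdiff) (Ideal.mem_sup_right hLg)

theorem IsSeparator.exists_isSeparator_of_mem_sup_span (hg : IsSeparator v P g) {m : ℕ}
    (hgm : g.IsHomogeneous m) (hL : L.IsHomogeneous 1) (hLne : ∀ i, eval (v i) L ≠ 0)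
    (hmem : g ∈ projIdeal v Set.univ ⊔ Ideal.span {L}) :
    0 < m ∧ ∃ q : MvPolynomial (Fin k) K, q.IsHomogeneous (m - 1) ∧ IsSeparator v P q := by
  obtain ⟨u, hu, w, hw, rfl⟩ := Submodule.mem_sup.1 hmem
  obtain ⟨q, rfl⟩ := Ideal.mem_span_singleton'.1 hw
  have hcomp := homogeneousComponent_of_mem (m := m) (n := m)
    ((mem_homogeneousSubmodule _ _).2 hgm)
  rw [if_pos rfl, map_add, homogeneousComponent_mul_of_isHomogeneous hL] at hcomp
  have hu_m : ∀ i, eval (v i) (homogeneousComponent m u) = 0 := fun i =>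
    eval_eq_zero_of_mem_projIdeal
      (homogeneousComponent_mem_of_mem (projIdeal_isHomogeneous v _) hu m) (Set.mem_univ i)
  have heval : ∀ i, eval (v i) (u + q * L) =
      if 1 ≤ m then eval (v i) (homogeneousComponent (m - 1) q) * eval (v i) L else 0 := by
    intro i
    rw [← hcomp, map_add, hu_m, zero_add]
    split_ifs <;> simp
  have hm : 1 ≤ m := by
    by_contra hm0
    exact hg.1 (by rw [heval, if_neg (by omega)])
  refine ⟨hm, homogeneousComponent (m - 1) q, homogeneousComponent_isHomogeneous _ _, ?_, ?_⟩
  · have := hg.1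
    rw [heval, if_pos hm] at this
    exact left_ne_zero_of_mul this
  · intro i hiP
    have := hg.2 i hiP
    rw [heval, if_pos hm] at this
    exact (mul_eq_zero.1 this).resolve_right (hLne i)

theorem socleDeg_le_of_isSeparator (hg : IsSeparator v P g) {m : ℕ} (hgm : g.IsHomogeneous m)
    (hL : L.IsHomogeneous 1) (hLne : ∀ i, eval (v i) L ≠ 0) :
    socleDeg v Set.univ L ≤ m := by
  classical
  -- A separator of least degree is a socle element.
  have hex : ∃ m, ∃ g : MvPolynomial (Fin k) K, g.IsHomogeneous m ∧ IsSeparator v P g :=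
    ⟨m, g, hgm, hg⟩
  obtain ⟨g₀, hg₀m, hg₀⟩ := Nat.find_spec hex
  have hnot : g₀ ∉ projIdeal v Set.univ ⊔ Ideal.span {L} := fun hmem => by
    obtain ⟨hpos, q, hq, hqsep⟩ := hg₀.exists_isSeparator_of_mem_sup_span hg₀m hL hLne hmem
    exact Nat.find_min hex (Nat.sub_one_lt hpos.ne') ⟨q, hq, hqsep⟩
  calc socleDeg v Set.univ L ≤ Nat.find hex :=
        Nat.sInf_le ⟨g₀, hg₀m, hnot, hg₀.X_mul_mem_sup_span hg₀m hL (hLne P)⟩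
    _ ≤ m := Nat.find_min' hex ⟨g, hgm, hg⟩

end Socle

theorem mindist_socle_dichotomy_general {K : Type*} [Field K] {n k : ℕ}
    (hk : 3 ≤ k)
    (v : Fin n → Fin k → K)
    (hglp : GeneralLinearPosition K v)
    (L : MvPolynomial (Fin k) K) (hL : L.IsHomogeneous 1)
    (hLne : ∀ i, eval (v i) L ≠ 0)
    (a : ℕ) :
    minDist a v ≤ k - 1 ∨
      (k - 1) * (socleDeg v Set.univ L - 1 - a) + 2 ≤ minDist a v := by
  classical
  refine or_iff_not_imp_left.2 fun hd => ?_
  obtain ⟨f, hf, ⟨P, hP⟩, hfd⟩ :=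
    Nat.sInf_mem (Nat.nonempty_of_pos_sInf (show 0 < minDist a v by omega))
  set d := minDist a v
  set D := (Finset.univ.filter fun i => eval (v i) f ≠ 0).erase P
  have hD : D.card = d - 1 := by
    rw [Finset.card_erase_of_mem (by simpa using hP), ← Set.ncard_coe_finset,
      Finset.coe_filter]
    simp [d, minDist, hfd]
  obtain ⟨t, htd, hdt⟩ : ∃ t, t * (k - 1) ≤ d - 2 ∧ d - 2 < t * (k - 1) + (k - 1) :=
    ⟨_, Nat.div_mul_le_self _ _, Nat.lt_div_mul_add (by omega)⟩
  have hDt : D.card ≤ (t + 1) * (k - 1) := by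
    rw [hD, add_one_mul]
    omega
  obtain ⟨h, hh, hsep⟩ := hglp.exists_isSeparator (by omega) (t + 1) hf hP
    (Finset.notMem_erase P _) (fun i hi hiP => by simpa [D, hiP] using hi) hDt
  have hs := socleDeg_le_of_isSeparator hsep hh hL hLne
  calc (k - 1) * (socleDeg v Set.univ L - 1 - a) + 2 ≤ (k - 1) * t + 2 := by gcongr; omega
    _ ≤ d := by rw [mul_comm]; omega

/-- Theorem 4.2: for `n ≥ k ≥ 3` points in general linear position and
`1 ≤ a ≤ s(X) - 1`, either `d(X)_a ≤ k - 1` or `d(X)_a ≥ (k-1)(s(X) - 1 - a) + 2`. -/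
theorem mindist_socle_dichotomy {K : Type*} [Field K] {n k : ℕ}
    (hk : 3 ≤ k) (hn : k ≤ n)
    (v : Fin n → Fin k → K) (hv0 : ∀ i, v i ≠ 0)
    (hglp : GeneralLinearPosition K v)
    (L : MvPolynomial (Fin k) K) (hL : L.IsHomogeneous 1)
    (hLne : ∀ i, eval (v i) L ≠ 0)
    (a : ℕ) (ha1 : 1 ≤ a) (ha2 : a ≤ socleDeg v Set.univ L - 1) :
    minDist a v ≤ k - 1 ∨
      (k - 1) * (socleDeg v Set.univ L - 1 - a) + 2 ≤ minDist a v :=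
  mindist_socle_dichotomy_general hk v hglp L hL hLne a
end

section
/- Let k ≥ 3 and let Y be a set of m ≥ k distinct K-rational points of P^{k-1} in general linear position, and let Q ∈ Y. Then there exist ⌈(m−1)/(k−1)⌉ hyperplanes of P^{k-1}, none of which contains Q, whose union contains Y \ {Q}. -/
open MvPolynomial

/-! Split the `m - 1` points other than `Q` into `⌈(m-1)/(k-1)⌉` blocks of at most
`k - 1` points. Together with `Q` each block has at most `k` points, hence is linearly
independent, so `v_Q` lies outside the span of the block and some linear form vanishes on the
block but not at `Q`. -/

namespace MvPolynomial

variable {σ K : Type*} [Fintype σ] [DecidableEq σ] [Field K]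

noncomputable def ofDual (φ : Module.Dual K (σ → K)) : MvPolynomial σ K :=
  ∑ i, C (φ fun j => if i = j then 1 else 0) * X i

theorem eval_ofDual (φ : Module.Dual K (σ → K)) (w : σ → K) : eval w (ofDual φ) = φ w := by
  simp only [ofDual, map_sum, map_mul, eval_C, eval_X, φ.pi_apply_eq_sum_univ w, smul_eq_mul,
    mul_comm]

theorem isHomogeneous_ofDual (φ : Module.Dual K (σ → K)) : (ofDual φ).IsHomogeneous 1 :=
  IsHomogeneous.sum _ _ _ fun i _ => by
    simpa using (isHomogeneous_C σ _).mul (isHomogeneous_X K i)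

end MvPolynomial

open Finset

theorem Finset.exists_cover_of_card_le_mul {α : Type*} (s : Finset α) {n d : ℕ}
    (h : #s ≤ n * d) :
    ∃ B : Fin n → Finset α, (∀ j, B j ⊆ s ∧ #(B j) ≤ d) ∧ ∀ a ∈ s, ∃ j, a ∈ B j := by
  classical
  set e := s.equivFin
  have hd (a : s) : 0 < d := Nat.pos_of_ne_zero fun hd0 => by
    have := (e a).isLt
    rw [hd0, mul_zero] at h
    omega
  let b (a : s) : Fin n := ⟨e a / d, (Nat.div_lt_iff_lt_mul (hd a)).2 (by omega)⟩
  refine ⟨fun j => ({a | b a = j} : Finset s).map (.subtype _), fun j => ⟨?_, ?_⟩, ?_⟩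
  · intro a ha
    obtain ⟨a, -, rfl⟩ := mem_map.1 ha
    exact a.2
  · rw [card_map]
    refine (card_le_card_of_injOn (fun a => (e a : ℕ) % d) (t := range d) ?_ ?_).trans_eq
      (card_range d)
    · exact fun a _ => mem_range.2 (Nat.mod_lt _ (hd a))
    · intro a ha a' ha' hmod
      have hdiv : (e a : ℕ) / d = e a' / d := by
        simpa [b, Fin.ext_iff] using (mem_filter.1 ha).2.trans (mem_filter.1 ha').2.symm
      refine e.injective (Fin.ext ?_)
      calc (e a : ℕ) = d * (e a / d) + e a % d := (Nat.div_add_mod _ _).symm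
        _ = d * (e a' / d) + e a' % d := congrArg₂ _ (congrArg _ hdiv) hmod
        _ = e a' := Nat.div_add_mod _ _
  · exact fun a ha => ⟨b ⟨a, ha⟩, mem_map.2 ⟨⟨a, ha⟩, by simp, rfl⟩⟩

theorem GeneralLinearPosition.exists_dual_ne_zero_forall_eq_zero {K : Type*} [Field K]
    {n k : ℕ} {v : Fin n → Fin k → K} (hv : GeneralLinearPosition K v) {s : Finset (Fin n)}
    (hs : #s < k) {q : Fin n} (hq : q ∉ s) :
    ∃ φ : Module.Dual K (Fin k → K), φ (v q) ≠ 0 ∧ ∀ i ∈ s, φ (v i) = 0 := by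
  have hli := hv (insert q s) ((card_insert_le q s).trans hs)
  have hspan : v q ∉ Submodule.span K (v '' s) := by
    have := hli.notMem_span_image (s := {i | (i : Fin n) ∈ s}) (x := ⟨q, mem_insert_self q s⟩)
      (by simpa using hq)
    convert this using 3
    ext w
    simp only [Set.mem_image, mem_coe, Set.mem_ofPred_eq, Subtype.exists, mem_insert]
    exact ⟨fun ⟨i, hi, hw⟩ => ⟨i, .inr hi, hi, hw⟩, fun ⟨i, _, hi, hw⟩ => ⟨i, hi, hw⟩⟩
  obtain ⟨φ, hφq, hφs⟩ := Submodule.exists_dual_map_eq_bot_of_notMem hspan inferInstance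
  refine ⟨φ, hφq, fun i hi => ?_⟩
  rw [← Submodule.mem_bot K, ← hφs]
  exact Submodule.mem_map_of_mem (Submodule.subset_span ⟨i, hi, rfl⟩)

theorem points_minus_one_covered_avoiding_q_general {K : Type*} [Field K] {k m : ℕ}
    (hk : 3 ≤ k)
    (v : Fin m → Fin k → K)
    (hglp : GeneralLinearPosition K v) (q : Fin m) :
    ∃ Ls : Fin ((m - 1 + k - 2) / (k - 1)) → MvPolynomial (Fin k) K,
      (∀ j, Ls j ≠ 0 ∧ (Ls j).IsHomogeneous 1 ∧ eval (v q) (Ls j) ≠ 0) ∧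
      ∀ i, i ≠ q → ∃ j, eval (v i) (Ls j) = 0 := by
  classical
  have hcard : #(univ.erase q) ≤ (m - 1 + k - 2) / (k - 1) * (k - 1) := by
    rw [card_erase_of_mem (mem_univ q), card_univ, Fintype.card_fin, mul_comm]
    have := Nat.div_add_mod (m - 1 + k - 2) (k - 1)
    have := Nat.mod_lt (m - 1 + k - 2) (show 0 < k - 1 by omega)
    omega
  obtain ⟨B, hB, hcover⟩ := (univ.erase q).exists_cover_of_card_le_mul hcard
  have hsep (j) : ∃ φ : Module.Dual K (Fin k → K), φ (v q) ≠ 0 ∧ ∀ i ∈ B j, φ (v i) = 0 :=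
    hglp.exists_dual_ne_zero_forall_eq_zero (by have := (hB j).2; omega)
      fun hq => by simpa using (hB j).1 hq
  choose φ hφq hφB using hsep
  refine ⟨fun j => ofDual (φ j), fun j => ⟨?_, isHomogeneous_ofDual _, ?_⟩, fun i hi => ?_⟩
  · refine ne_of_apply_ne (eval (v q)) ?_
    simpa only [eval_ofDual, map_zero] using hφq j
  · rw [eval_ofDual]
    exact hφq j
  · obtain ⟨j, hij⟩ := hcover i (by simpa using hi)
    exact ⟨j, by rw [eval_ofDual, hφB j i hij]⟩

/-- Step 3 in the proof of Theorem 4.2: for `m ≥ k ≥ 3` points in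
general linear position and a point `Q` among them, the other points lie on a union of
`⌈(m-1)/(k-1)⌉` hyperplanes, none of which contains `Q`. -/
theorem points_minus_one_covered_avoiding_q {K : Type*} [Field K] {k m : ℕ}
    (hk : 3 ≤ k) (hm : k ≤ m)
    (v : Fin m → Fin k → K) (hv0 : ∀ i, v i ≠ 0)
    (hglp : GeneralLinearPosition K v) (q : Fin m) :
    ∃ Ls : Fin ((m - 1 + k - 2) / (k - 1)) → MvPolynomial (Fin k) K,
      (∀ j, Ls j ≠ 0 ∧ (Ls j).IsHomogeneous 1 ∧ eval (v q) (Ls j) ≠ 0) ∧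
      ∀ i, i ≠ q → ∃ j, eval (v i) (Ls j) = 0 :=
  points_minus_one_covered_avoiding_q_general hk v hglp q
end

section
/- Let X be a set of n distinct K-rational points of P^{k-1} with k ≥ 3, not all contained in a hyperplane, and let a be an integer with 1 ≤ a ≤ α(X) − 1. Suppose d(X)_a = C(α(X) − 1 − a + k − 1, k − 1), i.e., the lower bound of Theorem 3.4 is attained. Let X' ⊊ X be a subset with |X'| = n − d(X)_a for which there exists a homogeneous polynomial f of degree a vanishing at every point of X' and at no point of Y := X \ X'. Then Y is in generic position and α(Y) = α(X) − a. -/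
/-!
If `f` has degree `a`, vanishes on `X'` and nowhere on `Y`, then for every nonzero form `g`
vanishing on `Y` the product `g * f` vanishes on all of `X`, so `α(X) ≤ deg g + a`. Attaining
the bound means `|Y| = d(X)_a = dim R_{α(X)-a-1}`, while `dim R_{α(X)-a} > |Y|`, so some form
of degree `α(X) - a` vanishes on `Y`, and `α(Y) = α(X) - a`. Evaluation at `Y` is then
injective in degrees `< α(Y)` and, by the dimension count, bijective in degree `α(Y) - 1`;
multiplying by a coordinate that does not vanish at a given point keeps it surjective in every
higher degree. This is exactly generic position.
-/

open MvPolynomial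

section Homogeneous

variable {σ K : Type*} [Field K]

instance [Finite σ] (i : ℕ) : Module.Finite K (homogeneousSubmodule σ K i) :=
  Module.Finite.iff_fg.mpr (homogeneousSubmodule_fg σ K i)

theorem finrank_homogeneousSubmodule [Finite σ] (i : ℕ) :
    Module.finrank K (homogeneousSubmodule σ K i) = (Nat.card σ + i - 1).choose i := by
  classical
  have := (Finsupp.finite_of_degree_eq (σ := σ) i).to_subtype
  have := Fintype.ofFinite {d : σ →₀ ℕ | d.degree = i}
  rw [homogeneousSubmodule_eq_finsupp_supported,
    (AddMonoidAlgebra.supportedEquivFinsupp _).finrank_eq, Module.finrank_finsupp_self,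
    ← Nat.card_eq_fintype_card, ← Sym.natCard_sym_eq_choose,
    Nat.card_congr (Sym.equivNatSum σ i)]
  rfl

theorem finrank_homogeneousSubmodule_fin {k : ℕ} (hk : 1 ≤ k) (i : ℕ) :
    Module.finrank K (homogeneousSubmodule (Fin k) K i) = (i + k - 1).choose (k - 1) := by
  obtain ⟨k, rfl⟩ := Nat.exists_eq_add_of_le' hk
  rw [finrank_homogeneousSubmodule, Nat.card_fin, Nat.add_sub_cancel,
    show k + 1 + i - 1 = i + k by omega, show i + (k + 1) - 1 = i + k by omega,
    Nat.choose_symm_add]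

theorem finrank_homogeneousSubmodule_lt_succ [Finite σ] (hσ : 2 ≤ Nat.card σ) (i : ℕ) :
    Module.finrank K (homogeneousSubmodule σ K i) <
      Module.finrank K (homogeneousSubmodule σ K (i + 1)) := by
  obtain ⟨N, hN⟩ := Nat.exists_eq_add_of_le' hσ
  rw [finrank_homogeneousSubmodule, finrank_homogeneousSubmodule, hN,
    show N + 2 + (i + 1) - 1 = (N + i + 1) + 1 by omega, Nat.choose_succ_succ',
    show N + 2 + i - 1 = N + i + 1 by omega]
  exact Nat.lt_add_of_pos_right (Nat.choose_pos (by omega))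

end Homogeneous

section Evaluation

variable {ι σ K : Type*} [Field K]

noncomputable def evalOn (v : ι → σ → K) (W : Set ι) (i : ℕ) :
    homogeneousSubmodule σ K i →ₗ[K] (W → K) :=
  (LinearMap.pi fun p : W => (aeval (v p)).toLinearMap).comp (Submodule.subtype _)

variable {v : ι → σ → K} {W : Set ι} {i : ℕ}

@[simp]
lemma evalOn_apply (g : homogeneousSubmodule σ K i) (p : W) :
    evalOn v W i g p = eval (v p) (g : MvPolynomial σ K) := by
  simp [evalOn]

lemma mem_ker_evalOn {g : homogeneousSubmodule σ K i} :
    g ∈ LinearMap.ker (evalOn v W i) ↔ ∀ p ∈ W, eval (v p) (g : MvPolynomial σ K) = 0 := by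
  simp [funext_iff]

lemma finrank_fun_set_eq_ncard [Finite ι] (W : Set ι) : Module.finrank K (W → K) = W.ncard := by
  have := Fintype.ofFinite W
  rw [Module.finrank_pi, ← Nat.card_eq_fintype_card, Nat.card_coe_set_eq]

lemma exists_vanishing_of_ncard_lt [Finite ι] [Finite σ]
    (h : W.ncard < Module.finrank K (homogeneousSubmodule σ K i)) :
    ∃ g : MvPolynomial σ K, g ≠ 0 ∧ g.IsHomogeneous i ∧ ∀ p ∈ W, eval (v p) g = 0 := by
  obtain ⟨g, hg, hg0⟩ := Submodule.exists_mem_ne_zero_of_ne_bot <|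
    (evalOn v W i).ker_ne_bot_of_finrank_lt (by rwa [finrank_fun_set_eq_ncard])
  exact ⟨g, fun h => hg0 (Subtype.ext h), g.2, mem_ker_evalOn.mp hg⟩

lemma evalOn_mul_X (g : homogeneousSubmodule σ K i) (j : σ) :
    evalOn v W (i + 1) ⟨(g : MvPolynomial σ K) * X j, g.2.mul (isHomogeneous_X K j)⟩ =
      fun p => evalOn v W i g p * v p j := by
  ext p
  simp

lemma evalOn_surjective_succ [Finite ι] (hv : ∀ p ∈ W, v p ≠ 0)
    (h : Function.Surjective (evalOn v W i)) : Function.Surjective (evalOn v W (i + 1)) := by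
  classical
  have hsingle : ∀ (p : W) (c : K), Pi.single p c ∈ LinearMap.range (evalOn v W (i + 1)) := by
    intro p c
    obtain ⟨j, hj⟩ := Function.ne_iff.mp (hv p p.2)
    obtain ⟨g, hg⟩ := h (Pi.single p (c / v p j))
    refine ⟨⟨(g : MvPolynomial σ K) * X j, g.2.mul (isHomogeneous_X K j)⟩, ?_⟩
    ext q
    rw [evalOn_mul_X, hg]
    rcases eq_or_ne q p with rfl | hq
    · simpa using div_mul_cancel₀ c hj
    · simp [hq]
  intro y
  have : Fintype W := Fintype.ofFinite W
  rw [← Finset.univ_sum_single y]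
  exact Submodule.sum_mem _ fun p _ => hsingle p (y p)

lemma evalOn_surjective_of_le [Finite ι] (hv : ∀ p ∈ W, v p ≠ 0) {d : ℕ}
    (h : Function.Surjective (evalOn v W d)) (hdi : d ≤ i) :
    Function.Surjective (evalOn v W i) := by
  induction i, hdi using Nat.le_induction with
  | base => exact h
  | succ i _ ih => exact evalOn_surjective_succ hv ih

end Evaluation

section InitialDegree

variable {K : Type*} [Field K] {n k : ℕ} {v : Fin n → Fin k → K} {W : Set (Fin n)}

lemma initDegOn_le {g : MvPolynomial (Fin k) K} {d : ℕ} (hg0 : g ≠ 0) (hg : g.IsHomogeneous d)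
    (hgW : ∀ p ∈ W, eval (v p) g = 0) : initDegOn v W ≤ d :=
  Nat.sInf_le ⟨g, hg0, hg, hgW⟩

lemma exists_isHomogeneous_initDegOn {g : MvPolynomial (Fin k) K} {d : ℕ} (hg0 : g ≠ 0)
    (hg : g.IsHomogeneous d) (hgW : ∀ p ∈ W, eval (v p) g = 0) :
    ∃ g : MvPolynomial (Fin k) K, g ≠ 0 ∧ g.IsHomogeneous (initDegOn v W) ∧
      ∀ p ∈ W, eval (v p) g = 0 := by
  have hne : {d | ∃ g : MvPolynomial (Fin k) K, g ≠ 0 ∧ g.IsHomogeneous d ∧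
      ∀ p ∈ W, eval (v p) g = 0}.Nonempty := ⟨d, g, hg0, hg, hgW⟩
  exact Nat.sInf_mem hne

lemma evalOn_injective_of_lt_initDegOn {i : ℕ} (hi : i < initDegOn v W) :
    Function.Injective (evalOn v W i) := by
  rw [← LinearMap.ker_eq_bot, eq_bot_iff]
  intro g hg
  by_contra hg0
  have := initDegOn_le (fun h => hg0 (Subtype.ext h)) g.2 (mem_ker_evalOn.mp hg)
  omega

end InitialDegree

section HilbertFunction

variable {K : Type*} [Field K] {n k : ℕ} {v : Fin n → Fin k → K} {W : Set (Fin n)} {i : ℕ}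

lemma homVan_eq_map_ker_evalOn :
    homVan i v W =
      (LinearMap.ker (evalOn v W i)).map (homogeneousSubmodule (Fin k) K i).subtype := by
  ext g
  simp [homVan, Submodule.mem_iInf, funext_iff, and_comm]

lemma HFpts_eq_finrank_range :
    HFpts v W i = Module.finrank K (LinearMap.range (evalOn v W i)) := by
  have := (evalOn v W i).finrank_range_add_finrank_ker
  rw [HFpts, homVan_eq_map_ker_evalOn, Submodule.finrank_map_subtype_eq]
  omega

lemma HFpts_eq_finrank_of_injective (h : Function.Injective (evalOn v W i)) :
    HFpts v W i = Module.finrank K (homogeneousSubmodule (Fin k) K i) := by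
  rw [HFpts_eq_finrank_range, LinearMap.finrank_range_of_inj h]

lemma HFpts_eq_ncard_of_surjective (h : Function.Surjective (evalOn v W i)) :
    HFpts v W i = W.ncard := by
  rw [HFpts_eq_finrank_range, LinearMap.range_eq_top.mpr h, finrank_top, finrank_fun_set_eq_ncard]

theorem HFpts_eq_min_of_ncard_eq_finrank (hk : 1 ≤ k) (hv : ∀ p ∈ W, v p ≠ 0) {m : ℕ}
    (hα : initDegOn v W = m + 1)
    (hW : W.ncard = Module.finrank K (homogeneousSubmodule (Fin k) K m)) (i : ℕ) :
    HFpts v W i = min W.ncard ((i + k - 1).choose (k - 1)) := by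
  have hinj {j : ℕ} (hj : j ≤ m) : Function.Injective (evalOn v W j) :=
    evalOn_injective_of_lt_initDegOn (by omega)
  rcases le_total m i with hmi | him
  · have hsurj : Function.Surjective (evalOn v W m) := by
      refine (LinearMap.injective_iff_surjective_of_finrank_eq_finrank ?_).mp (hinj le_rfl)
      rw [finrank_fun_set_eq_ncard, hW]
    rw [HFpts_eq_ncard_of_surjective (evalOn_surjective_of_le hv hsurj hmi), min_eq_left]
    rw [hW, finrank_homogeneousSubmodule_fin hk]
    exact Nat.choose_le_choose _ (by omega)
  · rw [HFpts_eq_finrank_of_injective (hinj him), finrank_homogeneousSubmodule_fin hk,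
      min_eq_right]
    rw [hW, finrank_homogeneousSubmodule_fin hk]
    exact Nat.choose_le_choose _ (by omega)

end HilbertFunction

section Complement

variable {K : Type*} [Field K] {n k : ℕ} {v : Fin n → Fin k → K} {S : Set (Fin n)} {a : ℕ}
  {f : MvPolynomial (Fin k) K}

lemma ncard_compl_eq_minDist (hS : S ≠ Set.univ) (hcard : S.ncard = n - minDist a v)
    (hf : f.IsHomogeneous a) (hvan : ∀ i ∈ S, eval (v i) f = 0)
    (hnz : ∀ i ∉ S, eval (v i) f ≠ 0) : Sᶜ.ncard = minDist a v := by
  obtain ⟨p, hp⟩ := (Set.ne_univ_iff_exists_notMem S).mp hS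
  have hsupp : {i | eval (v i) f ≠ 0} = Sᶜ :=
    Set.ext fun i => ⟨fun h hi => h (hvan i hi), hnz i⟩
  have hle : minDist a v ≤ Sᶜ.ncard := hsupp ▸ Nat.sInf_le ⟨f, hf, ⟨p, hnz p hp⟩, rfl⟩
  have hsum := Set.ncard_add_ncard_compl S
  rw [Nat.card_fin] at hsum
  omega

lemma initDegOn_univ_le_initDegOn_compl_add (hf0 : f ≠ 0) (hf : f.IsHomogeneous a)
    (hvan : ∀ i ∈ S, eval (v i) f = 0) {g : MvPolynomial (Fin k) K} {d : ℕ} (hg0 : g ≠ 0)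
    (hg : g.IsHomogeneous d) (hgY : ∀ i ∈ Sᶜ, eval (v i) g = 0) :
    initDegOn v Set.univ ≤ initDegOn v Sᶜ + a := by
  obtain ⟨q, hq0, hq, hqY⟩ := exists_isHomogeneous_initDegOn hg0 hg hgY
  refine initDegOn_le (mul_ne_zero hq0 hf0) (hq.mul hf) fun i _ => ?_
  by_cases hi : i ∈ S <;> simp [hvan, hqY, hi]

end Complement

theorem attained_bound_implies_generic_position_general {K : Type*} [Field K] {n k : ℕ}
    (hk : 3 ≤ k)
    (v : Fin n → Fin k → K) (hv0 : ∀ i, v i ≠ 0)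
    (a : ℕ) (ha1 : 1 ≤ a) (ha2 : a ≤ initDegOn v Set.univ - 1)
    (hmin : minDist a v = Nat.choose (initDegOn v Set.univ - 1 - a + (k - 1)) (k - 1))
    (S : Set (Fin n)) (hS : S ≠ Set.univ) (hcard : S.ncard = n - minDist a v)
    (f : MvPolynomial (Fin k) K) (hf : f.IsHomogeneous a)
    (hvan : ∀ i ∈ S, eval (v i) f = 0) (hnz : ∀ i ∉ S, eval (v i) f ≠ 0) :
    (∀ i : ℕ, HFpts v Sᶜ i = min (Sᶜ.ncard) (Nat.choose (i + k - 1) (k - 1))) ∧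
      initDegOn v Sᶜ + a = initDegOn v Set.univ := by
  set α := initDegOn v Set.univ
  have hY : Sᶜ.ncard = Module.finrank K (homogeneousSubmodule (Fin k) K (α - a - 1)) := by
    rw [ncard_compl_eq_minDist hS hcard hf hvan hnz, hmin,
      finrank_homogeneousSubmodule_fin (by omega)]
    congr 1
    omega
  obtain ⟨g, hg0, hg, hgY⟩ := exists_vanishing_of_ncard_lt (v := v) (i := α - a) <| by
    rw [hY, show α - a = α - a - 1 + 1 by omega]
    exact finrank_homogeneousSubmodule_lt_succ (by rw [Nat.card_fin]; omega) _
  have hf0 : f ≠ 0 := by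
    obtain ⟨p, hp⟩ := (Set.ne_univ_iff_exists_notMem S).mp hS
    exact fun h => hnz p hp (by simp [h])
  have hαY : initDegOn v Sᶜ + a = α :=
    le_antisymm (by have := initDegOn_le hg0 hg hgY; omega)
      (initDegOn_univ_le_initDegOn_compl_add hf0 hf hvan hg0 hg hgY)
  exact ⟨HFpts_eq_min_of_ncard_eq_finrank (by omega) (fun i _ => hv0 i) (by omega) hY, hαY⟩

/-- Section 5: if the bound of Theorem 3.4 is attained, then the
complement `Y = X \ X'` is in generic position and `α(Y) = α(X) - a`. -/
theorem attained_bound_implies_generic_position {K : Type*} [Field K] {n k : ℕ}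
    (hk : 3 ≤ k)
    (v : Fin n → Fin k → K) (hv0 : ∀ i, v i ≠ 0) (hdist : ProjectivelyDistinct v)
    (hspan : Submodule.span K (Set.range v) = ⊤)
    (a : ℕ) (ha1 : 1 ≤ a) (ha2 : a ≤ initDegOn v Set.univ - 1)
    (hmin : minDist a v = Nat.choose (initDegOn v Set.univ - 1 - a + (k - 1)) (k - 1))
    (S : Set (Fin n)) (hS : S ≠ Set.univ) (hcard : S.ncard = n - minDist a v)
    (f : MvPolynomial (Fin k) K) (hf : f.IsHomogeneous a)
    (hvan : ∀ i ∈ S, eval (v i) f = 0) (hnz : ∀ i ∉ S, eval (v i) f ≠ 0) :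
    (∀ i : ℕ, HFpts v Sᶜ i = min (Sᶜ.ncard) (Nat.choose (i + k - 1) (k - 1))) ∧
      initDegOn v Sᶜ + a = initDegOn v Set.univ :=
  attained_bound_implies_generic_position_general hk v hv0 a ha1 ha2 hmin S hS hcard f hf hvan hnz
end

section
/- Let k ≥ 3 and m ≥ 3 be integers. Let Y be a nonempty finite set of distinct K-rational points of P^{k-1} such that α(Y) = m − 1 and I(Y) is generated by homogeneous polynomials f_1,…,f_μ, all of degree m − 1. Let L ∈ R_1 be a linear form with L(v_P) ≠ 0 for every P ∈ Y, and let P_1,…,P_ℓ be distinct K-rational points of P^{k-1} with representative vectors w_1,…,w_ℓ satisfying L(w_i) = 0 for all i. If the ℓ × μ matrix (f_j(w_i))_{i,j} has rank μ, then the set X = Y ∪ {P_1,…,P_ℓ} satisfies α(X) = m. -/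
open MvPolynomial

/-! A nonzero form `L * g`, with `g` a form of degree `m - 1` through `Y`, vanishes on `X`, so
`α(X) ≤ m`. Conversely a form of degree `m - 1` through `X` lies in `I(Y)`, hence is a
`K`-linear combination `∑ c_j f_j` of the generators; vanishing at the points `P_i` says that
`c` lies in the kernel of the injective matrix `(f_j(w_i))`, so the form is zero. -/

lemma MvPolynomial.homogeneousComponent_mul_of_isHomogeneous {σ R : Type*} [CommSemiring R]
    {d : ℕ} {s : MvPolynomial σ R} (hs : s.IsHomogeneous d) (g : MvPolynomial σ R) :
    homogeneousComponent d (g * s) = g.coeff 0 • s := by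
  conv_lhs => rw [← sum_homogeneousComponent g, Finset.sum_mul, map_sum]
  rw [Finset.sum_eq_single 0]
  · rw [homogeneousComponent_of_mem (m := d) (n := 0 + d)
      ((homogeneousComponent_isHomogeneous 0 g).mul hs), if_pos (zero_add d).symm,
      homogeneousComponent_zero, smul_eq_C_mul]
  · intro i _ hi
    rw [homogeneousComponent_of_mem (m := d) (n := i + d)
      ((homogeneousComponent_isHomogeneous i g).mul hs), if_neg (by omega)]
  · simp

lemma MvPolynomial.homogeneousComponent_mem_span_of_mem_ideal_span {σ R ι : Type*}
    [CommSemiring R] [Fintype ι] {d : ℕ} {f : ι → MvPolynomial σ R}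
    (hf : ∀ j, (f j).IsHomogeneous d) {p : MvPolynomial σ R}
    (hp : p ∈ Ideal.span (Set.range f)) :
    homogeneousComponent d p ∈ Submodule.span R (Set.range f) := by
  obtain ⟨g, rfl⟩ := Submodule.mem_span_range_iff_exists_fun _ |>.mp hp
  simp only [map_sum, smul_eq_mul, homogeneousComponent_mul_of_isHomogeneous (hf _)]
  exact Submodule.sum_mem _ fun j _ => Submodule.smul_mem _ _ (Submodule.subset_span ⟨j, rfl⟩)

lemma Matrix.mulVec_injective_of_rank_eq_card {m n K : Type*} [Field K] [Fintype n]
    (A : Matrix m n K) (hA : A.rank = Fintype.card n) : Function.Injective A.mulVec :=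
  Matrix.mulVec_injective_iff.mpr <| linearIndependent_iff_card_eq_finrank_span.mpr <| by
    rw [← hA, Matrix.rank_eq_finrank_span_cols, Set.finrank]

lemma MvPolynomial.eq_zero_of_mem_span_of_eval_eq_zero {σ ι κ K : Type*} [Field K] [Fintype ι]
    {f : ι → MvPolynomial σ K} (w : κ → σ → K)
    (hrank : (Matrix.of fun i j => eval (w i) (f j)).rank = Fintype.card ι)
    {p : MvPolynomial σ K} (hp : p ∈ Submodule.span K (Set.range f))
    (hw : ∀ i, eval (w i) p = 0) : p = 0 := by
  obtain ⟨c, rfl⟩ := Submodule.mem_span_range_iff_exists_fun _ |>.mp hp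
  have hc : (Matrix.of fun i j => eval (w i) (f j)).mulVec c = 0 := by
    ext i
    simpa [Matrix.mulVec, dotProduct, smul_eq_C_mul, mul_comm] using hw i
  obtain rfl : c = 0 :=
    Matrix.mulVec_injective_of_rank_eq_card _ hrank (hc.trans (Matrix.mulVec_zero _).symm)
  simp

section InitialDegree

variable {K : Type*} [Field K] {n k : ℕ} {v : Fin n → Fin k → K} {S : Set (Fin n)}

lemma initDegOn_le_s17 {d : ℕ} {f : MvPolynomial (Fin k) K} (hf0 : f ≠ 0) (hf : f.IsHomogeneous d)
    (hS : ∀ i ∈ S, eval (v i) f = 0) : initDegOn v S ≤ d :=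
  Nat.sInf_le ⟨f, hf0, hf, hS⟩

lemma exists_isHomogeneous_initDegOn_s17 (h : initDegOn v S ≠ 0) :
    ∃ f : MvPolynomial (Fin k) K, f ≠ 0 ∧ f.IsHomogeneous (initDegOn v S) ∧
      ∀ i ∈ S, eval (v i) f = 0 :=
  Nat.sInf_mem <| Set.nonempty_iff_ne_empty.mpr fun hempty =>
    h (Nat.sInf_eq_zero.mpr (Or.inr hempty))

lemma initDegOn_eq_of_forall_le {d : ℕ} {f : MvPolynomial (Fin k) K} (hf0 : f ≠ 0)
    (hf : f.IsHomogeneous d) (hS : ∀ i ∈ S, eval (v i) f = 0)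
    (hmin : ∀ e (g : MvPolynomial (Fin k) K), g ≠ 0 → g.IsHomogeneous e →
      (∀ i ∈ S, eval (v i) g = 0) → d ≤ e) :
    initDegOn v S = d := by
  refine le_antisymm (initDegOn_le_s17 hf0 hf hS) ?_
  obtain ⟨g, hg0, hg, hgS⟩ := Nat.sInf_mem (s := { e | ∃ g : MvPolynomial (Fin k) K, g ≠ 0 ∧
    g.IsHomogeneous e ∧ ∀ i ∈ S, eval (v i) g = 0 }) ⟨d, f, hf0, hf, hS⟩
  exact hmin _ g hg0 hg hgS

end InitialDegree

lemma forall_eval_append_eq_zero_iff {K : Type*} [Field K] {n ℓ k : ℕ}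
    (v : Fin n → Fin k → K) (w : Fin ℓ → Fin k → K) (g : MvPolynomial (Fin k) K) :
    (∀ i ∈ Set.univ, eval (Fin.append v w i) g = 0) ↔
      (∀ i ∈ Set.univ, eval (v i) g = 0) ∧ ∀ i, eval (w i) g = 0 := by
  simp only [Set.mem_univ, true_imp_iff, Fin.forall_fin_add, Fin.append_left, Fin.append_right]

theorem initDeg_of_union_with_hyperplane_points_general {K : Type*} [Field K]
    {k m n ℓ μ : ℕ} (hm : 3 ≤ m) (hn : 0 < n)
    (v : Fin n → Fin k → K)
    (hα : initDegOn v Set.univ = m - 1)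
    (f : Fin μ → MvPolynomial (Fin k) K) (hf : ∀ j, (f j).IsHomogeneous (m - 1))
    (hgen : projIdeal v Set.univ = Ideal.span (Set.range f))
    (L : MvPolynomial (Fin k) K) (hL : L.IsHomogeneous 1)
    (hLv : ∀ i, eval (v i) L ≠ 0)
    (w : Fin ℓ → Fin k → K)
    (hwL : ∀ i, eval (w i) L = 0)
    (hrank : (Matrix.of fun (i : Fin ℓ) (j : Fin μ) => eval (w i) (f j)).rank = μ) :
    initDegOn (Fin.append v w) Set.univ = m := by
  obtain ⟨g, hg0, hg, hgY⟩ := exists_isHomogeneous_initDegOn_s17 (v := v) (S := Set.univ) (by omega)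
  rw [hα] at hg
  have hL0 : L ≠ 0 := fun h => hLv ⟨0, hn⟩ (by simp [h])
  refine initDegOn_eq_of_forall_le (mul_ne_zero hL0 hg0) ?_ ?_ ?_
  · simpa [show 1 + (m - 1) = m by omega] using hL.mul hg
  · rw [forall_eval_append_eq_zero_iff]
    exact ⟨fun i _ => by simp [hgY i trivial], fun i => by simp [hwL i]⟩
  · intro e h h0 hh hX
    obtain ⟨hY, hw⟩ := (forall_eval_append_eq_zero_iff v w h).mp hX
    have hle : m - 1 ≤ e := hα ▸ initDegOn_le_s17 h0 hh hY
    by_contra! he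
    obtain rfl : e = m - 1 := by omega
    have hI : h ∈ projIdeal v Set.univ := Ideal.subset_span ⟨⟨_, hh⟩, hY⟩
    rw [hgen] at hI
    replace hI := homogeneousComponent_mem_span_of_mem_ideal_span hf hI
    rw [homogeneousComponent_eq_self hh] at hI
    exact h0 (eq_zero_of_mem_span_of_eval_eq_zero w (by simpa using hrank) hI hw)

/-- Remark 5.1: adding to `Y` sufficiently generic points on the
hyperplane `V(L)` raises the initial degree from `m - 1` to `m`. -/
theorem initDeg_of_union_with_hyperplane_points {K : Type*} [Field K]
    {k m n ℓ μ : ℕ} (hk : 3 ≤ k) (hm : 3 ≤ m) (hn : 0 < n)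
    (v : Fin n → Fin k → K) (hv0 : ∀ i, v i ≠ 0) (hdist : ProjectivelyDistinct v)
    (hα : initDegOn v Set.univ = m - 1)
    (f : Fin μ → MvPolynomial (Fin k) K) (hf : ∀ j, (f j).IsHomogeneous (m - 1))
    (hgen : projIdeal v Set.univ = Ideal.span (Set.range f))
    (L : MvPolynomial (Fin k) K) (hL : L.IsHomogeneous 1)
    (hLv : ∀ i, eval (v i) L ≠ 0)
    (w : Fin ℓ → Fin k → K) (hw0 : ∀ i, w i ≠ 0) (hwdist : ProjectivelyDistinct w)
    (hwL : ∀ i, eval (w i) L = 0)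
    (hrank : (Matrix.of fun (i : Fin ℓ) (j : Fin μ) => eval (w i) (f j)).rank = μ) :
    initDegOn (Fin.append v w) Set.univ = m :=
  initDeg_of_union_with_hyperplane_points_general hm hn v hα f hf hgen L hL hLv w hwL hrank
end
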